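/- For all real numbers b, s, t with 0 ≤ b, 0 ≤ s ≤ 1, 0 ≤ t, the function M₅(b,s,t) = (max{2, 2b} + s + t)² / ((1/4)(1 - b + 2s + t)² + (3/4)(1 + t + b)²) satisfies M₅(b,s,t) ≤ 13/3, with equality when b = 6, s = 1, t = 0. -/

import Mathlib

/-!
Clearing the (positive) denominator `D`, the bound `M₅ ≤ 13/3` becomes `3 N² ≤ 13 D` for
`N = max 2 (2b) + s + t`, and for each of the two values of the max the difference `13 D - 3 N²`
is an explicit sum of terms that are nonnegative on `b, t ≥ 0`, `0 ≤ s ≤ 1`. In the branch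
`N = 2b + s + t` these are `(b - 6s)²`, `13 (1 - s)(b + 1 + 2s)` and a multiple of `t`, all of which
vanish at `(b, s, t) = (6, 1, 0)`.
-/

noncomputable def M₅ (b s t : ℝ) : ℝ :=
  (max 2 (2*b) + s + t)^2 / ((1/4) * (1 - b + 2*s + t)^2 + (3/4) * (1 + t + b)^2)

section

variable {b s t : ℝ}

lemma M₅_denom_pos (hbt : 1 + t + b ≠ 0) :
    0 < (1/4) * (1 - b + 2*s + t)^2 + (3/4) * (1 + t + b)^2 := by
  linarith [sq_nonneg (1 - b + 2*s + t), sq_pos_of_ne_zero hbt]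

lemma three_mul_sq_two_add_le (hb : 0 ≤ b) (hs : 0 ≤ s) (hs1 : s ≤ 1) (ht : 0 ≤ t) :
    3 * (2 + s + t)^2 ≤ 13 * ((1/4) * (1 - b + 2*s + t)^2 + (3/4) * (1 + t + b)^2) := by
  have key : 13 * ((1/4) * (1 - b + 2*s + t)^2 + (3/4) * (1 + t + b)^2) - 3 * (2 + s + t)^2
      = 13 * b * (1 - s) + 13 * b^2 + 10 * s^2 + s + 1 + t * (10*t + 13*b + 7*s + 14) := by
    ring
  linarith [sq_nonneg b, sq_nonneg s, mul_nonneg hb (sub_nonneg.2 hs1),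
    mul_nonneg ht (by linarith : 0 ≤ 10*t + 13*b + 7*s + 14)]

lemma three_mul_sq_two_mul_add_le (hb : 0 ≤ b) (hs : 0 ≤ s) (hs1 : s ≤ 1) (ht : 0 ≤ t) :
    3 * (2*b + s + t)^2 ≤ 13 * ((1/4) * (1 - b + 2*s + t)^2 + (3/4) * (1 + t + b)^2) := by
  have key : 13 * ((1/4) * (1 - b + 2*s + t)^2 + (3/4) * (1 + t + b)^2) - 3 * (2*b + s + t)^2
      = (b - 6*s)^2 + 13 * (1 - s) * (b + 1 + 2*s) + t * (10*t + b + 7*s + 26) := by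
    ring
  linarith [sq_nonneg (b - 6*s), mul_nonneg (sub_nonneg.2 hs1) (by linarith : 0 ≤ b + 1 + 2*s),
    mul_nonneg ht (by linarith : 0 ≤ 10*t + b + 7*s + 26)]

lemma M₅_le (hb : 0 ≤ b) (hs : 0 ≤ s) (hs1 : s ≤ 1) (ht : 0 ≤ t) : M₅ b s t ≤ 13/3 := by
  rw [M₅, div_le_iff₀ (M₅_denom_pos (by linarith))]
  rcases max_choice 2 (2*b) with h | h <;> rw [h]
  · linarith [three_mul_sq_two_add_le hb hs hs1 ht]
  · linarith [three_mul_sq_two_mul_add_le hb hs hs1 ht]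

end

lemma M₅_six_one_zero : M₅ 6 1 0 = 13/3 := by
  norm_num [M₅]

theorem stmt_9 :
    (∀ b s t : ℝ, 0 ≤ b → 0 ≤ s → s ≤ 1 → 0 ≤ t →
      (max 2 (2*b) + s + t)^2 /
        ((1/4) * (1 - b + 2*s + t)^2 + (3/4) * (1 + t + b)^2) ≤ 13/3) ∧
    (max 2 (2*6) + 1 + 0 : ℝ)^2 /
      ((1/4) * (1 - 6 + 2*1 + 0 : ℝ)^2 + (3/4) * (1 + 0 + 6 : ℝ)^2) = 13/3 :=
  ⟨fun _ _ _ hb hs hs1 ht => M₅_le hb hs hs1 ht, M₅_six_one_zero⟩
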